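/- (Water-filling.) Let k ≥ 1 and ψ : {1,…,k} → ℝ satisfy Σ_{i=1}^k (ψ(i) − min_{j} ψ(j)) ≤ 1. Then min_{q ∈ Δ_k} max_{1 ≤ i ≤ k} (ψ(i) − q(i)) = (1/k) Σ_{i=1}^k ψ(i) − 1/k, where Δ_k is the set of probability vectors q ∈ ℝ^k (q(i) ≥ 0, Σ_i q(i) = 1). -/

import Mathlib

open Finset

noncomputable section

/-- Water-filling: if `ψ : [k] → ℝ` satisfies `Σ_i (ψ(i) − min_j ψ(j)) ≤ 1`,
then `min_{q ∈ Δ_k} max_i (ψ(i) − q(i)) = (1/k) Σ_i ψ(i) − 1/k`. -/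
theorem water_filling (k : ℕ) (hk : 1 ≤ k) (ψ : Fin k → ℝ)
    (hψ : ∑ i : Fin k, (ψ i - Finset.univ.inf' ⟨⟨0, hk⟩, Finset.mem_univ _⟩ ψ) ≤ 1) :
    IsLeast
      ((fun q : Fin k → ℝ =>
          Finset.univ.sup' ⟨⟨0, hk⟩, Finset.mem_univ _⟩ (fun i => ψ i - q i)) ''
        {q : Fin k → ℝ | (∀ i, 0 ≤ q i) ∧ ∑ i : Fin k, q i = 1})
      ((∑ i : Fin k, ψ i) / k - 1 / k) := by
  have hk0 : (0 : ℝ) < k := by positivity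
  set c : ℝ := (∑ i : Fin k, ψ i) / k - 1 / k with hc
  have hck : (k : ℝ) * c = (∑ i : Fin k, ψ i) - 1 := by
    rw [hc]
    field_simp
  constructor
  · refine ⟨fun i => ψ i - c, ⟨?_, ?_⟩, ?_⟩
    · intro i
      show (0:ℝ) ≤ ψ i - c
      have hm : Finset.univ.inf' ⟨⟨0, hk⟩, Finset.mem_univ _⟩ ψ ≤ ψ i :=
        Finset.inf'_le _ (Finset.mem_univ i)
      have hsum : (∑ i : Fin k, ψ i) - (k : ℝ) *
          Finset.univ.inf' ⟨⟨0, hk⟩, Finset.mem_univ _⟩ ψ ≤ 1 := by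
        have := hψ
        rwa [Finset.sum_sub_distrib, Finset.sum_const, Finset.card_univ,
          Fintype.card_fin, nsmul_eq_mul] at this
      have : c ≤ Finset.univ.inf' ⟨⟨0, hk⟩, Finset.mem_univ _⟩ ψ := by
        rw [hc, div_sub_div_same, div_le_iff₀ hk0]
        nlinarith
      linarith
    · rw [Finset.sum_sub_distrib, Finset.sum_const, Finset.card_univ,
        Fintype.card_fin, nsmul_eq_mul, hck]
      ring
    · simp only [sub_sub_cancel]
      exact Finset.sup'_const _ c
  · rintro x ⟨q, ⟨hq0, hq1⟩, rfl⟩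
    set S := Finset.univ.sup' ⟨⟨0, hk⟩, Finset.mem_univ _⟩ (fun i => ψ i - q i) with hS
    have hle : ∀ i : Fin k, ψ i - q i ≤ S := fun i =>
      Finset.le_sup' (fun i => ψ i - q i) (Finset.mem_univ i)
    have hsum : (∑ i : Fin k, ψ i) - 1 ≤ (k : ℝ) * S := by
      calc (∑ i : Fin k, ψ i) - 1 = ∑ i : Fin k, (ψ i - q i) := by
            rw [Finset.sum_sub_distrib, hq1]
        _ ≤ ∑ _i : Fin k, S := Finset.sum_le_sum fun i _ => hle i
        _ = (k : ℝ) * S := by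
            rw [Finset.sum_const, Finset.card_univ, Fintype.card_fin, nsmul_eq_mul]
    rw [hc, div_sub_div_same, div_le_iff₀ hk0]
    nlinarith
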